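/- Let p/q be a positive irreducible fraction with p even, and let r/s and r'/s' be two distinct children of p/q. Then T(r/s) ⊆ T(p/q), p/q ∉ T(r/s), and T(r/s) ∩ T(r'/s') = ∅. -/

import Mathlib

/-- Evaluate the continued fraction `[a_0, …, a_{n-1}, x]` projectively:
the pair `(u, w)` represents the fraction `u/w` (with `(±1, 0)` representing
`∞`), and `[a, rest] = a + 1/rest` corresponds to `(u,w) ↦ (a*u + w, u)`. -/
def cfFold (l : List ℤ) (x : ℤ × ℤ) : ℤ × ℤ :=
  l.foldr (fun a y => (a * y.1 + y.2, y.1)) x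

/-- The coprime pair `(numerator, denominator)` of the continued fraction
`[a_0, …, a_n]`; the empty continued fraction is `∞ = (1, 0)`. -/
def cfPair (l : List ℤ) : ℤ × ℤ :=
  cfFold l (1, 0)

/-- The rational number represented by a pair. -/
def pairQ (x : ℤ × ℤ) : ℚ :=
  (x.1 : ℚ) / (x.2 : ℚ)

/-- The value of the continued fraction `[a_0, …, a_n]` as a rational number. -/
def cfVal (l : List ℤ) : ℚ :=
  pairQ (cfPair l)

/-- `l = [a_0, …, a_n]` is a standard continued fraction expansion:
`a_0 ≥ 0`, `a_i ≥ 1` for `1 ≤ i ≤ n`, and `a_n ≥ 2`. -/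
def IsStdCF (l : List ℤ) : Prop :=
  l ≠ [] ∧ 0 ≤ l.head! ∧ (∀ b ∈ l.tail, 1 ≤ b) ∧ 2 ≤ l.getLast!

/-- The coprime-up-to-sign pair representing the continued fraction
`[a_0, …, a_{n-1}, a_n + 2/t]` with rational last entry
`a + 2/t = (a*t + 2)/t` (for odd `t` the pair `(a*t + 2, t)` is coprime). -/
def childPair (l : List ℤ) (a t : ℤ) : ℤ × ℤ :=
  cfFold l (a * t + 2, t)

/-- The open interval of rationals between the fractions represented by the
pairs `P` and `Q` (ordered appropriately); if one endpoint is `∞`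
(denominator `0`), the interval is unbounded above. -/
def pairItv (P Q : ℤ × ℤ) : Set ℚ :=
  if P.2 = 0 then Set.Ioi (pairQ Q)
  else if Q.2 = 0 then Set.Ioi (pairQ P)
  else Set.Ioo (min (pairQ P) (pairQ Q)) (max (pairQ P) (pairQ Q))

/-- The territory `T(p/q)` of a fraction with standard continued fraction
expansion `l ++ [a]`: the open interval with endpoints
`[a_0, …, a_{n-1}, a_n - 1]` and `[a_0, …, a_{n-1}, ∞] = [a_0, …, a_{n-1}]`. -/
def territory (l : List ℤ) (a : ℤ) : Set ℚ :=
  pairItv (cfFold l (a - 1, 1)) (cfPair l)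

/-- The territory of the child `[a_0, …, a_{n-1}, a_n + 2/t]` of
`l ++ [a]`: the open interval with endpoints
`[a_0, …, a_{n-1}, a_n + 2/(t+1)]` and `[a_0, …, a_{n-1}, a_n + 2/(t-1)]`. -/
def childTerritory (l : List ℤ) (a t : ℤ) : Set ℚ :=
  pairItv (cfFold l (a * (t + 1) + 2, t + 1)) (cfFold l (a * (t - 1) + 2, t - 1))

/-!
The map `cfFold l` is the action of an integer matrix of determinant `±1`: it multiplies the
cross product `cross P Q = P.1 * Q.2 - Q.1 * P.2` by `±1`, it is onto, and, all partial quotients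
being nonnegative, it maps the first quadrant into itself. For first-quadrant endpoints `Y₁, Y₂`,
a fraction `n / d` with `d > 0` lies in `pairItv Y₁ Y₂` exactly when
`cross (n, d) Y₁ * cross (n, d) Y₂ < 0`. So membership in every territory pulls back along
`cfFold l` to the same condition on a preimage `W = (m, n)` of `(y.num, y.den)` and the
untransformed endpoints `(a - 1, 1)`, `(1, 0)` and `(a * s + 2, s)`.

There `cross W (a * s + 2, s) = s * k - 2 * n` with `k = m - a * n` is affine in `s`. In the
coordinate `ζ = 2 * n / k` the child territory of `t` becomes the interval `(t - 1, t + 1)`, the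
territory of `p/q` the complement of `[-2, 0]`, and `p/q` itself the point `ζ = ∞`; for odd `t ≠ -1`
all three claims are then immediate.
-/

lemma Odd.one_le_or_le_neg_three {t : ℤ} (ht : Odd t) (ht1 : t ≠ -1) : 1 ≤ t ∨ t ≤ -3 := by
  obtain ⟨j, rfl⟩ := ht
  omega

def cross (P Q : ℤ × ℤ) : ℤ :=
  P.1 * Q.2 - Q.1 * P.2

lemma cross_neg_left (P Q : ℤ × ℤ) : cross (-P) Q = -cross P Q := by
  simp only [cross, Prod.fst_neg, Prod.snd_neg]
  ring

lemma cross_neg_right (P Q : ℤ × ℤ) : cross P (-Q) = -cross P Q := by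
  simp only [cross, Prod.fst_neg, Prod.snd_neg]
  ring

section SignChange

variable {R : Type*} [CommRing R] [LinearOrder R] [IsStrictOrderedRing R] {k c u v w z : R}

lemma mul_pos_of_mul_neg_of_le (h : (u * k - c) * (v * k - c) < 0) (huv : u ≤ v) (hvw : v ≤ w) :
    0 < (v * k - c) * (w * k - c) := by
  have hv : v * k - c ≠ 0 := by
    rintro hv
    rw [hv, mul_zero] at h
    exact lt_irrefl _ h
  have hkv : 0 < k * (v * k - c) := by
    have e : k * (v * k - c) * (v - u) = (v * k - c) ^ 2 - (u * k - c) * (v * k - c) := by ring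
    exact pos_of_mul_pos_left (by rw [e]; nlinarith [sq_nonneg (v * k - c)]) (sub_nonneg.2 huv)
  calc 0 < (v * k - c) ^ 2 + (w - v) * (k * (v * k - c)) :=
        add_pos_of_pos_of_nonneg (pow_two_pos_of_ne_zero hv) (mul_nonneg (sub_nonneg.2 hvw) hkv.le)
    _ = (v * k - c) * (w * k - c) := by ring

lemma mul_pos_of_mul_neg_of_same_side (h : (u * k - c) * (v * k - c) < 0) (huv : u ≤ v)
    (hside : (v ≤ w ∧ v ≤ z) ∨ (w ≤ u ∧ z ≤ u)) : 0 < (w * k - c) * (z * k - c) := by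
  obtain ⟨x, hw, hz⟩ : ∃ x, 0 < x * (w * k - c) ∧ 0 < x * (z * k - c) := by
    rcases hside with ⟨hw, hz⟩ | ⟨hw, hz⟩
    · exact ⟨_, mul_pos_of_mul_neg_of_le h huv hw, mul_pos_of_mul_neg_of_le h huv hz⟩
    · have h' : (-v * -k - c) * (-u * -k - c) < 0 := by
        simpa only [neg_mul_neg, mul_comm (v * k - c)] using h
      have hw' := mul_pos_of_mul_neg_of_le h' (neg_le_neg huv) (neg_le_neg hw)
      have hz' := mul_pos_of_mul_neg_of_le h' (neg_le_neg huv) (neg_le_neg hz)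
      simp only [neg_mul_neg] at hw' hz'
      exact ⟨_, hw', hz'⟩
  exact pos_of_mul_pos_right (by nlinarith [mul_pos hw hz]) (sq_nonneg x)

end SignChange

section CfFold

lemma cfFold_cons (b : ℤ) (l : List ℤ) (X : ℤ × ℤ) :
    cfFold (b :: l) X = (b * (cfFold l X).1 + (cfFold l X).2, (cfFold l X).1) :=
  rfl

lemma cfPair_append_singleton (l : List ℤ) (a : ℤ) : cfPair (l ++ [a]) = cfFold l (a, 1) := by
  simp [cfPair, cfFold]

lemma cross_cfFold (l : List ℤ) (P Q : ℤ × ℤ) :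
    cross (cfFold l P) (cfFold l Q) = (-1) ^ l.length * cross P Q := by
  induction l with
  | nil => simp [cfFold]
  | cons b l ih =>
    rw [cfFold_cons, cfFold_cons, List.length_cons, pow_succ]
    simp only [cross] at ih ⊢
    linear_combination -ih

lemma cfFold_neg (l : List ℤ) (X : ℤ × ℤ) : cfFold l (-X) = -cfFold l X := by
  induction l with
  | nil => rfl
  | cons b l ih =>
    rw [cfFold_cons, cfFold_cons, ih]
    ext <;> simp only [Prod.fst_neg, Prod.snd_neg]
    ring

lemma cfFold_surjective (l : List ℤ) : Function.Surjective (cfFold l) := by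
  induction l with
  | nil => exact fun Z => ⟨Z, rfl⟩
  | cons b l ih =>
    intro Z
    obtain ⟨W, hW⟩ := ih (Z.2, Z.1 - b * Z.2)
    exact ⟨W, by rw [cfFold_cons, hW]; ext <;> simp⟩

lemma cfFold_pos {l : List ℤ} (hl : ∀ b ∈ l, 0 ≤ b) {X : ℤ × ℤ} (hX : 0 < X) :
    0 < cfFold l X := by
  induction l with
  | nil => exact hX
  | cons b l ih =>
    have hb : 0 ≤ b := hl b List.mem_cons_self
    have hY := ih fun b hb => hl b (List.mem_cons_of_mem _ hb)
    rw [cfFold_cons]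
    generalize cfFold l X = Y at hY ⊢
    obtain ⟨u, w⟩ := Y
    simp only [Prod.lt_iff, Prod.fst_zero, Prod.snd_zero] at hY ⊢
    rcases hY with ⟨hu, hw⟩ | ⟨hu, hw⟩
    · exact Or.inr ⟨by positivity, hu⟩
    · exact Or.inl ⟨by positivity, hu⟩

lemma IsStdCF.nonneg_and_two_le {l : List ℤ} {a : ℤ} (h : IsStdCF (l ++ [a])) :
    (∀ b ∈ l, 0 ≤ b) ∧ 2 ≤ a := by
  obtain ⟨-, hhead, htail, hlast⟩ := h
  refine ⟨?_, by simpa using hlast⟩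
  rcases l with _ | ⟨b, l⟩
  · simp
  · simp only [List.cons_append, List.head!_cons, List.tail_cons] at hhead htail
    rintro c (_ | ⟨_, hc⟩)
    · exact hhead
    · linarith [htail c (List.mem_append_left _ hc)]

end CfFold

section PairItv

variable {n d : ℤ} {Y Y₁ Y₂ : ℤ × ℤ}

lemma pairItv_neg (P Q : ℤ × ℤ) : pairItv (-P) (-Q) = pairItv P Q := by
  simp [pairItv, pairQ, neg_div_neg_eq]

lemma cross_pos_iff (hd : 0 < d) (hY : 0 < Y.2) : 0 < cross (n, d) Y ↔ pairQ Y < n / d := by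
  rw [pairQ, div_lt_div_iff₀ (by exact_mod_cast hY) (by exact_mod_cast hd), cross, sub_pos]
  norm_cast

lemma cross_neg_iff (hd : 0 < d) (hY : 0 < Y.2) : cross (n, d) Y < 0 ↔ n / d < pairQ Y := by
  rw [pairQ, div_lt_div_iff₀ (by exact_mod_cast hd) (by exact_mod_cast hY), cross, sub_neg]
  norm_cast

lemma cross_neg_of_snd_eq_zero (hd : 0 < d) (hY : 0 < Y) (h : Y.2 = 0) : cross (n, d) Y < 0 := by
  have : 0 < Y.1 := by simpa [Prod.lt_iff, h] using hY
  simp only [cross, h, mul_zero, zero_sub, neg_neg_iff_pos]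
  positivity

lemma mem_pairItv_iff (h₁ : 0 < Y₁) (h₂ : 0 < Y₂) (h : cross Y₁ Y₂ ≠ 0) (hd : 0 < d) :
    (n / d : ℚ) ∈ pairItv Y₁ Y₂ ↔ cross (n, d) Y₁ * cross (n, d) Y₂ < 0 := by
  have hpos : ∀ {Y : ℤ × ℤ}, 0 < Y → Y.2 ≠ 0 → 0 < Y.2 := fun hY hY0 =>
    lt_of_le_of_ne (by simpa using hY.le.2) hY0.symm
  unfold pairItv
  split_ifs with e₁ e₂
  · have e₂ : Y₂.2 ≠ 0 := fun e₂ => h (by simp [cross, e₁, e₂])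
    rw [Set.mem_Ioi, ← cross_pos_iff hd (hpos h₂ e₂), mul_neg_iff]
    have := cross_neg_of_snd_eq_zero (n := n) hd h₁ e₁
    constructor
    · exact fun h => Or.inr ⟨this, h⟩
    · rintro (⟨h, -⟩ | ⟨-, h⟩)
      exacts [absurd h this.not_gt, h]
  · rw [Set.mem_Ioi, ← cross_pos_iff hd (hpos h₁ e₁), mul_neg_iff]
    have := cross_neg_of_snd_eq_zero (n := n) hd h₂ e₂
    constructor
    · exact fun h => Or.inl ⟨h, this⟩
    · rintro (⟨h, -⟩ | ⟨-, h⟩)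
      exacts [h, absurd h this.not_gt]
  · rw [Set.mem_Ioo, min_lt_iff, lt_max_iff, mul_neg_iff,
      cross_pos_iff hd (hpos h₁ e₁), cross_pos_iff hd (hpos h₂ e₂),
      cross_neg_iff hd (hpos h₁ e₁), cross_neg_iff hd (hpos h₂ e₂)]
    constructor
    · rintro ⟨h | h, h' | h'⟩
      exacts [absurd h (lt_asymm h'), Or.inl ⟨h, h'⟩, Or.inr ⟨h', h⟩, absurd h (lt_asymm h')]
    · rintro (⟨h, h'⟩ | ⟨h, h'⟩)
      exacts [⟨Or.inl h, Or.inr h'⟩, ⟨Or.inr h', Or.inl h⟩]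

end PairItv

section Pullback

variable {l : List ℤ} {a t : ℤ} {W : ℤ × ℤ} {n d : ℤ}

lemma mem_pairItv_cfFold_iff (hl : ∀ b ∈ l, 0 ≤ b) {X₁ X₂ : ℤ × ℤ} (h₁ : 0 < X₁) (h₂ : 0 < X₂)
    (h : cross X₁ X₂ ≠ 0) (hW : cfFold l W = (n, d)) (hd : 0 < d) :
    (n / d : ℚ) ∈ pairItv (cfFold l X₁) (cfFold l X₂) ↔ cross W X₁ * cross W X₂ < 0 := by
  have hε : ((-1 : ℤ) ^ l.length) * (-1) ^ l.length = 1 := by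
    rw [← mul_pow]
    norm_num
  have h' : cross (cfFold l X₁) (cfFold l X₂) ≠ 0 := by
    rw [cross_cfFold]
    exact mul_ne_zero (pow_ne_zero _ (by norm_num)) h
  rw [mem_pairItv_iff (cfFold_pos hl h₁) (cfFold_pos hl h₂) h' hd, ← hW, cross_cfFold,
    cross_cfFold, mul_mul_mul_comm, hε, one_mul]

/-- `InParentArc a` and `InChildArc a t` are the territories of `p/q = cfFold l (a, 1)` and of its
children, pulled back along `cfFold l` to pairs of integers. -/
def InParentArc (a : ℤ) (W : ℤ × ℤ) : Prop :=
  cross W (a - 1, 1) * cross W (1, 0) < 0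

def InChildArc (a t : ℤ) (W : ℤ × ℤ) : Prop :=
  cross W (a * (t + 1) + 2, t + 1) * cross W (a * (t - 1) + 2, t - 1) < 0

lemma mem_territory_iff (hl : ∀ b ∈ l, 0 ≤ b) (ha : 1 ≤ a) (hW : cfFold l W = (n, d))
    (hd : 0 < d) : (n / d : ℚ) ∈ territory l a ↔ InParentArc a W :=
  mem_pairItv_cfFold_iff hl (Prod.lt_iff.2 (Or.inr ⟨by simpa using ha, by simp⟩))
    (Prod.lt_iff.2 (Or.inl ⟨by simp, by simp⟩)) (by simp [cross]) hW hd

lemma mem_childTerritory_iff (hl : ∀ b ∈ l, 0 ≤ b) (ha : 1 ≤ a) (ht : Odd t) (ht1 : t ≠ -1)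
    (hW : cfFold l W = (n, d)) (hd : 0 < d) :
    (n / d : ℚ) ∈ childTerritory l a t ↔ InChildArc a t W := by
  have hcross : cross (a * (t + 1) + 2, t + 1) (a * (t - 1) + 2, t - 1) ≠ 0 := by
    simp only [cross]
    ring_nf
    norm_num
  rcases ht.one_le_or_le_neg_three ht1 with ht | ht
  · have hpos : ∀ s : ℤ, 0 ≤ s → 0 < ((a * s + 2, s) : ℤ × ℤ) := fun s hs =>
      Prod.lt_iff.2 (Or.inl ⟨by simp; positivity, by simpa using hs⟩)
    exact mem_pairItv_cfFold_iff hl (hpos _ (by omega)) (hpos _ (by omega)) hcross hW hd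
  · have hpos : ∀ s : ℤ, s ≤ -2 → 0 < -((a * s + 2, s) : ℤ × ℤ) := fun s hs =>
      Prod.lt_iff.2 <| Or.inr
        ⟨by simp; nlinarith [mul_le_mul_of_nonneg_left hs (by omega : (0 : ℤ) ≤ a)], by simp; omega⟩
    rw [childTerritory, ← pairItv_neg, ← cfFold_neg, ← cfFold_neg,
      mem_pairItv_cfFold_iff hl (hpos _ (by omega)) (hpos _ (by omega))
        (by rwa [cross_neg_left, cross_neg_right, neg_neg]) hW hd,
      cross_neg_right, cross_neg_right, neg_mul_neg, InChildArc]

lemma exists_mem_territory_iff (hl : ∀ b ∈ l, 0 ≤ b) (ha : 1 ≤ a) (y : ℚ) :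
    ∃ W : ℤ × ℤ, (y ∈ territory l a ↔ InParentArc a W) ∧
      ∀ t : ℤ, Odd t → t ≠ -1 → (y ∈ childTerritory l a t ↔ InChildArc a t W) := by
  obtain ⟨W, hW⟩ := cfFold_surjective l (y.num, y.den)
  have hd : (0 : ℤ) < y.den := by exact_mod_cast y.den_pos
  rw [← Rat.num_div_den y]
  exact ⟨W, mem_territory_iff hl ha hW hd, fun t ht ht1 =>
    by exact_mod_cast mem_childTerritory_iff hl ha ht ht1 hW hd⟩

end Pullback

section Arcs

variable {a t t' : ℤ} {W : ℤ × ℤ}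

lemma cross_child (W : ℤ × ℤ) (a s : ℤ) :
    cross W (a * s + 2, s) = s * (W.1 - a * W.2) - 2 * W.2 := by
  simp only [cross]
  ring

lemma inParentArc_of_inChildArc (ht : Odd t) (ht1 : t ≠ -1) (h : InChildArc a t W) :
    InParentArc a W := by
  rw [InChildArc, cross_child, cross_child, mul_comm] at h
  have key := mul_pos_of_mul_neg_of_same_side (w := -2) (z := 0) h (by omega) <| by
    rcases ht.one_le_or_le_neg_three ht1 with ht | ht
    · exact Or.inr ⟨by omega, by omega⟩
    · exact Or.inl ⟨by omega, by omega⟩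
  have e : 4 * (cross W (a - 1, 1) * cross W (1, 0)) =
      -((-2 * (W.1 - a * W.2) - 2 * W.2) * (0 * (W.1 - a * W.2) - 2 * W.2)) := by
    simp only [cross]
    ring
  rw [InParentArc]
  linarith

lemma eq_of_inChildArc (ht : Odd t) (ht' : Odd t') (h : InChildArc a t W)
    (h' : InChildArc a t' W) : t = t' := by
  by_contra hne
  wlog hlt : t < t' generalizing t t'
  · exact this ht' ht h' h (Ne.symm hne) (by omega)
  have hgap : t + 2 ≤ t' := by
    obtain ⟨i, rfl⟩ := ht
    obtain ⟨j, rfl⟩ := ht'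
    omega
  rw [InChildArc, cross_child, cross_child] at h h'
  rw [mul_comm] at h
  exact lt_asymm h' <| mul_pos_of_mul_neg_of_same_side (w := t' + 1) (z := t' - 1) h (by omega)
    (Or.inl ⟨by omega, by omega⟩)

lemma not_inChildArc_self (a t : ℤ) : ¬InChildArc a t (a, 1) := by
  rw [InChildArc, cross_child, cross_child]
  norm_num

end Arcs

theorem child_territories_general (p q : ℤ) (hq : 0 < q)
    (l : List ℤ) (a : ℤ) (hstd : IsStdCF (l ++ [a]))
    (hval : cfPair (l ++ [a]) = (p, q))
    (t t' : ℤ) (ht : Odd t) (ht1 : t ≠ -1) (ht' : Odd t') (ht'1 : t' ≠ -1)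
    (hne : t ≠ t') :
    childTerritory l a t ⊆ territory l a ∧
    (p : ℚ) / q ∉ childTerritory l a t ∧
    childTerritory l a t ∩ childTerritory l a t' = ∅ := by
  obtain ⟨hl, ha⟩ := hstd.nonneg_and_two_le
  have ha1 : 1 ≤ a := by omega
  refine ⟨fun y hy => ?_, ?_, Set.eq_empty_iff_forall_notMem.2 fun y hy => ?_⟩
  · obtain ⟨W, hT, hC⟩ := exists_mem_territory_iff hl ha1 y
    exact hT.2 (inParentArc_of_inChildArc ht ht1 ((hC t ht ht1).1 hy))
  · rw [cfPair_append_singleton] at hval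
    rw [mem_childTerritory_iff hl ha1 ht ht1 hval hq]
    exact not_inChildArc_self a t
  · obtain ⟨W, -, hC⟩ := exists_mem_territory_iff hl ha1 y
    exact hne (eq_of_inChildArc ht ht' ((hC t ht ht1).1 hy.1) ((hC t' ht' ht'1).1 hy.2))

/-- Let `p/q` be a positive irreducible fraction with `p` even and standard
continued fraction expansion `l ++ [a]`, and let `t, t'` be parameters of two
distinct children of `p/q` (odd integers `≠ -1`).  Then the territory of the
child lies inside the territory of `p/q`, `p/q` is not in the child's
territory, and the territories of the two distinct children are disjoint. -/
theorem child_territories (p q : ℤ) (hp : 0 < p) (hq : 0 < q)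
    (hco : Int.gcd p q = 1) (hev : 2 ∣ p)
    (l : List ℤ) (a : ℤ) (hstd : IsStdCF (l ++ [a]))
    (hval : cfPair (l ++ [a]) = (p, q))
    (t t' : ℤ) (ht : Odd t) (ht1 : t ≠ -1) (ht' : Odd t') (ht'1 : t' ≠ -1)
    (hne : t ≠ t') :
    childTerritory l a t ⊆ territory l a ∧
    (p : ℚ) / q ∉ childTerritory l a t ∧
    childTerritory l a t ∩ childTerritory l a t' = ∅ :=
  child_territories_general p q hq l a hstd hval t t' ht ht1 ht' ht'1 hne
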